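/- If a countable group G acts by order-preserving bijections on a totally-ordered set S in such a way that the kernel of the action is left-orderable, then G is left-orderable. -/

import Mathlib

/-!
Enumerate `G` and, for each element acting nontrivially, pick a point of `S` that it moves.
Evaluating the action at this sequence of points maps `G` to `S^ℕ` with fibres the cosets of the
kernel, and, since every `g` acts monotonically, compatibly with the lexicographic order of `S^ℕ`.
Ordering `G` first by this image and then, inside a coset `aK`, by the order of `a⁻¹b` in the
kernel `K` gives a left-invariant total order.
-/

section LeftOrderable

variable {G : Type*} [Group G]

def IsLeftInvariant (r : G → G → Prop) : Prop :=
  ∀ a b c : G, r a b ↔ r (c * a) (c * b)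

variable (G) in
def IsLeftOrderable : Prop :=
  ∃ r : G → G → Prop, IsStrictTotalOrder G r ∧ IsLeftInvariant r

namespace IsLeftInvariant

variable {r : G → G → Prop} [IsStrictTotalOrder G r]

theorem rel_one_mul (hr : IsLeftInvariant r) {x y : G} (hx : r 1 x) (hy : r 1 y) :
    r 1 (x * y) :=
  trans_of r hx (by simpa only [mul_one] using (hr 1 y x).mp hy)

theorem eq_one_or_rel_one_or_rel_one_inv (hr : IsLeftInvariant r) (x : G) :
    x = 1 ∨ r 1 x ∨ r 1 x⁻¹ := by
  rcases trichotomous_of r 1 x with h | h | h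
  · exact .inr (.inl h)
  · exact .inl h.symm
  · exact .inr (.inr (by simpa only [inv_mul_cancel, mul_one] using (hr x 1 x⁻¹).mp h))

end IsLeftInvariant

theorem IsLeftOrderable.of_subgroup {T : Type*} [LinearOrder T] {H : Subgroup G}
    (hH : IsLeftOrderable H) (Φ : G → T) (hΦ_eq : ∀ a b, Φ a = Φ b ↔ a⁻¹ * b ∈ H)
    (hΦ_lt : ∀ c a b, Φ a < Φ b → Φ (c * a) < Φ (c * b)) : IsLeftOrderable G := by
  obtain ⟨rH, _, hrH⟩ := hH
  let pos (g : G) : Prop := ∃ hg : g ∈ H, rH 1 ⟨g, hg⟩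
  have pos_mul {g h : G} : pos g → pos h → pos (g * h) := fun ⟨hg, h₁⟩ ⟨hh, h₂⟩ =>
    ⟨mul_mem hg hh, hrH.rel_one_mul h₁ h₂⟩
  have pos_mem {g : G} : pos g → g ∈ H := fun ⟨hg, _⟩ => hg
  refine ⟨fun a b => Φ a < Φ b ∨ pos (a⁻¹ * b), { trichotomous := ?_, irrefl := ?_, trans := ?_ },
    fun a b c => ?_⟩
  · intro a b hab hba
    obtain hΦ | hΦ | hΦ := lt_trichotomy (Φ a) (Φ b)
    · exact absurd (.inl hΦ) hab
    · have hmem := (hΦ_eq a b).mp hΦ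
      obtain hone | hpos | hneg := hrH.eq_one_or_rel_one_or_rel_one_inv ⟨a⁻¹ * b, hmem⟩
      · exact inv_mul_eq_one.mp (congrArg Subtype.val hone)
      · exact absurd (.inr ⟨hmem, hpos⟩) hab
      · have hpos' : pos (b⁻¹ * a) := by
          simpa only [mul_inv_rev, inv_inv] using (⟨inv_mem hmem, hneg⟩ : pos _)
        exact absurd (.inr hpos') hba
    · exact absurd (.inl hΦ) hba
  · rintro a (h | h)
    · exact lt_irrefl _ h
    · rw [inv_mul_cancel] at h
      exact irrefl_of rH _ h.2
  · rintro a b c (hab | hab) (hbc | hbc)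
    · exact .inl (hab.trans hbc)
    · exact .inl (((hΦ_eq b c).mpr (pos_mem hbc)) ▸ hab)
    · exact .inl (((hΦ_eq a b).mpr (pos_mem hab)) ▸ hbc)
    · exact .inr (by simpa only [mul_assoc, mul_inv_cancel_left] using pos_mul hab hbc)
  · have hΦ_iff : Φ a < Φ b ↔ Φ (c * a) < Φ (c * b) :=
      ⟨hΦ_lt c a b, fun h => by simpa only [inv_mul_cancel_left] using hΦ_lt c⁻¹ _ _ h⟩
    simp only [hΦ_iff, mul_inv_rev, mul_assoc, inv_mul_cancel_left]

end LeftOrderable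

theorem Pi.toLex_comp_lt_toLex_comp {ι α β : Type*} [LT ι] [Preorder α] [Preorder β] {g : α → β}
    (hg : StrictMono g) {x y : ι → α} (h : toLex x < toLex y) : toLex (g ∘ x) < toLex (g ∘ y) :=
  let ⟨i, heq, hlt⟩ := h
  ⟨i, fun j hj => congrArg g (heq j hj), hg hlt⟩

theorem exists_seq_forall_apply_eq_iff_mem_ker {G S : Type*} [Group G] [Countable G] [Nonempty S]
    (f : G →* Equiv.Perm S) : ∃ t : ℕ → S, ∀ g, (∀ n, f g (t n) = t n) ↔ g ∈ f.ker := by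
  have hmoved (g : G) : ∃ s, g ∉ f.ker → f g s ≠ s := by
    by_cases hg : g ∈ f.ker
    · exact ⟨Classical.arbitrary S, absurd hg⟩
    · obtain ⟨s, hs⟩ := not_forall.mp fun h => hg (f.mem_ker.mpr (Equiv.ext h))
      exact ⟨s, fun _ => hs⟩
  choose w hw using hmoved
  obtain ⟨u, hu⟩ := exists_surjective_nat G
  refine ⟨w ∘ u, fun g => ⟨fun hfix => ?_, fun hg n => by rw [f.mem_ker.mp hg]; rfl⟩⟩
  obtain ⟨n, rfl⟩ := hu g
  exact not_not.mp fun hg => hw _ hg (hfix n)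

/-- If a countable group `G` acts by order-preserving bijections on a totally
ordered set `S` with left-orderable kernel, then `G` is left-orderable. -/
theorem stmt12 {G : Type*} {S : Type*} [Group G] [Countable G] [LinearOrder S]
    (f : G →* Equiv.Perm S)
    (hmono : ∀ g : G, StrictMono (f g))
    (hker : ∃ r : f.ker → f.ker → Prop, IsStrictTotalOrder f.ker r ∧
      ∀ a b c : f.ker, r a b ↔ r (c * a) (c * b)) :
    ∃ r : G → G → Prop, IsStrictTotalOrder G r ∧
      ∀ a b c : G, r a b ↔ r (c * a) (c * b) := by
  change IsLeftOrderable f.ker at hker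
  rcases isEmpty_or_nonempty S with hS | hS
  · refine hker.of_subgroup (fun _ => ()) (fun a b => ?_) fun _ _ _ h => absurd h (lt_irrefl _)
    exact iff_of_true rfl (f.mem_ker.mpr (Subsingleton.elim _ _))
  · obtain ⟨t, ht⟩ := exists_seq_forall_apply_eq_iff_mem_ker f
    refine hker.of_subgroup (fun g => toLex fun n => f g (t n)) (fun a b => ?_) fun c a b h => ?_
    · simp only [← ht, toLex_inj, funext_iff, map_mul, map_inv, Equiv.Perm.mul_apply,
        Equiv.Perm.inv_eq_iff_eq]
      exact forall_congr' fun _ => eq_comm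
    · simp only [map_mul, Equiv.Perm.mul_apply]
      exact Pi.toLex_comp_lt_toLex_comp (hmono c) h
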